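/- A set {z1, z2, z3} of distinct roots of a polynomial z³ + g₂z + g₃ admits a nontrivial symmetry by an affine map z ↦ az + b (a ≠ 0) permuting the roots nontrivially if and only if its j-invariant equals 0 (in which case there is a symmetry of order 3) or 1 (in which case there is a symmetry of order 2). -/

import Mathlib

/-!
An affine symmetry `z ↦ a z + b` of a centred triple fixes the centroid `0`, so `b = 0` and
`z ∘ σ = a • z`. Comparing power sums, `a² g₂ = g₂` and `a³ g₃ = g₃`; as `σ ≠ 1` forces `a ≠ 1`,
either `g₂ = 0` or `a = -1` and `g₃ = 0`. Since the discriminant `-4g₂³ - 27g₃²` does not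
vanish, these are exactly `j = 0` and `j = 1`. Conversely, for `g₂ = 0` the roots are
`z₀, ωz₀, ω²z₀` and multiplication by `ω` rotates them, while for `g₃ = 0` one root is `0` and
negation swaps the other two.
-/

open Equiv Function

section AffineSymmetry

variable {ι K : Type*} [Fintype ι] [Field K]

theorem pow_mul_sum_pow_eq_of_comp_perm_eq_mul {z : ι → K} {σ : Perm ι} {a : K}
    (h : ∀ i, z (σ i) = a * z i) (k : ℕ) : a ^ k * ∑ i, z i ^ k = ∑ i, z i ^ k :=
  calc a ^ k * ∑ i, z i ^ k = ∑ i, z (σ i) ^ k := by simp only [h, mul_pow, Finset.mul_sum]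
    _ = ∑ i, z i ^ k := Equiv.sum_comp σ (z · ^ k)

theorem eq_zero_of_mul_add_eq_comp_perm [Nonempty ι] [CharZero K] {z : ι → K}
    (hsum : ∑ i, z i = 0) {σ : Perm ι} {a b : K} (h : ∀ i, a * z i + b = z (σ i)) : b = 0 := by
  have : (Fintype.card ι : K) * b = 0 := by
    calc (Fintype.card ι : K) * b = a * ∑ i, z i + ∑ _i : ι, b := by simp [hsum]
      _ = ∑ i, z (σ i) := by simp only [← h, Finset.mul_sum, Finset.sum_add_distrib]
      _ = 0 := by rw [Equiv.sum_comp σ z, hsum]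
  simpa using this

end AffineSymmetry

section Cubic

variable {K : Type*} [Field K]

def jInvariant (g₂ g₃ : K) : K := -4 * g₂ ^ 3 / (-4 * g₂ ^ 3 - 27 * g₃ ^ 2)

theorem jInvariant_eq_zero_iff [CharZero K] {g₂ g₃ : K} (h : -4 * g₂ ^ 3 - 27 * g₃ ^ 2 ≠ 0) :
    jInvariant g₂ g₃ = 0 ↔ g₂ = 0 := by
  rw [jInvariant, div_eq_zero_iff, or_iff_left h]
  simp

theorem jInvariant_eq_one_iff [CharZero K] {g₂ g₃ : K} (h : -4 * g₂ ^ 3 - 27 * g₃ ^ 2 ≠ 0) :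
    jInvariant g₂ g₃ = 1 ↔ g₃ = 0 := by
  rw [jInvariant, div_eq_one_iff_eq h, eq_comm, sub_eq_self]
  simp

theorem discr_eq_sq_prod_sub {z : Fin 3 → K} (hsum : z 0 + z 1 + z 2 = 0) :
    -4 * (z 0 * z 1 + z 0 * z 2 + z 1 * z 2) ^ 3 - 27 * (-(z 0 * z 1 * z 2)) ^ 2 =
      ((z 0 - z 1) * (z 0 - z 2) * (z 1 - z 2)) ^ 2 := by
  rw [show z 2 = -(z 0 + z 1) by linear_combination hsum]
  ring

theorem discr_ne_zero {z : Fin 3 → K} (hz : Injective z) (hsum : z 0 + z 1 + z 2 = 0) :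
    -4 * (z 0 * z 1 + z 0 * z 2 + z 1 * z 2) ^ 3 - 27 * (-(z 0 * z 1 * z 2)) ^ 2 ≠ 0 := by
  rw [discr_eq_sq_prod_sub hsum]
  simp only [ne_eq, pow_eq_zero_iff two_ne_zero, mul_eq_zero, sub_eq_zero, hz.eq_iff]
  decide

theorem g2_eq_zero_or_prod_eq_zero_of_symmetry [CharZero K] {z : Fin 3 → K} (hz : Injective z)
    (hsum : z 0 + z 1 + z 2 = 0) {a b : K} {σ : Perm (Fin 3)} (hσ : σ ≠ 1)
    (h : ∀ i, a * z i + b = z (σ i)) :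
    z 0 * z 1 + z 0 * z 2 + z 1 * z 2 = 0 ∨ z 0 * z 1 * z 2 = 0 := by
  have hb : b = 0 := eq_zero_of_mul_add_eq_comp_perm (by simpa [Fin.sum_univ_three]) h
  have hscale : ∀ i, z (σ i) = a * z i := fun i => by rw [← h, hb, add_zero]
  have ha : a ≠ 1 := by
    rintro rfl
    exact hσ (Perm.ext fun i => hz (by simp [hscale]))
  -- Power sums of degree 2 and 3 are `-2 g₂` and `-3 g₃` when the roots sum to zero.
  have h2 := pow_mul_sum_pow_eq_of_comp_perm_eq_mul hscale 2
  have h3 := pow_mul_sum_pow_eq_of_comp_perm_eq_mul hscale 3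
  simp only [Fin.sum_univ_three] at h2 h3
  have hz2 : z 2 = -(z 0 + z 1) := by linear_combination hsum
  rw [hz2] at h2 h3 ⊢
  have e2 : (a ^ 2 - 1) * (z 0 * z 1 + z 0 * -(z 0 + z 1) + z 1 * -(z 0 + z 1)) = 0 := by
    linear_combination (-1 / 2 : K) * h2
  have e3 : (a ^ 3 - 1) * (z 0 * z 1 * -(z 0 + z 1)) = 0 := by
    linear_combination (1 / 3 : K) * h3
  refine or_iff_not_imp_left.2 fun hg2 => ?_
  have ha' : a = -1 := by
    have : (a - 1) * (a + 1) = 0 := by linear_combination (mul_eq_zero.1 e2).resolve_right hg2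
    exact eq_neg_of_add_eq_zero_left ((mul_eq_zero.1 this).resolve_left (sub_ne_zero.2 ha))
  subst ha'
  have : (-2 : K) * (z 0 * z 1 * -(z 0 + z 1)) = 0 := by linear_combination e3
  simpa using this

theorem exists_symmetry_orderOf_eq_three {z : Fin 3 → K} (h01 : z 0 ≠ z 1)
    (hsum : z 0 + z 1 + z 2 = 0) (hg2 : z 0 * z 1 + z 0 * z 2 + z 1 * z 2 = 0) :
    ∃ (a b : K) (σ : Perm (Fin 3)), a ≠ 0 ∧ orderOf σ = 3 ∧ ∀ i, a * z i + b = z (σ i) := by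
  have hq : z 0 ^ 2 + z 0 * z 1 + z 1 ^ 2 = 0 := by linear_combination -hg2 + (z 0 + z 1) * hsum
  obtain ⟨hz0, hz1⟩ : z 0 ≠ 0 ∧ z 1 ≠ 0 := by
    constructor <;> rintro h <;> simp_all
  refine ⟨z 1 / z 0, 0, finRotate 3, div_ne_zero hz1 hz0, ?_, fun i => ?_⟩
  · rw [isCycle_finRotate.orderOf, support_finRotate, Finset.card_univ, Fintype.card_fin]
  · fin_cases i
    · show z 1 / z 0 * z 0 + 0 = z 1
      rw [div_mul_cancel₀ _ hz0, add_zero]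
    · show z 1 / z 0 * z 1 + 0 = z 2
      field_simp
      linear_combination hq - z 0 * hsum
    · show z 1 / z 0 * z 2 + 0 = z 0
      field_simp
      linear_combination -hq + z 1 * hsum

theorem exists_symmetry_orderOf_eq_two {z : Fin 3 → K} (hsum : z 0 + z 1 + z 2 = 0)
    (hg3 : z 0 * z 1 * z 2 = 0) :
    ∃ (a b : K) (σ : Perm (Fin 3)), a ≠ 0 ∧ orderOf σ = 2 ∧ ∀ i, a * z i + b = z (σ i) := by
  obtain ⟨k, -, hk⟩ := Finset.prod_eq_zero_iff.1 (show ∏ i, z i = 0 by rwa [Fin.prod_univ_three])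
  have hne : k + 1 ≠ k + 2 := (add_right_injective k).ne (by decide)
  refine ⟨-1, 0, swap (k + 1) (k + 2), by simp, ?_, fun i => ?_⟩
  · rw [(Perm.isCycle_swap hne).orderOf, Perm.support_swap hne, Finset.card_pair hne]
  · fin_cases k <;> fin_cases i <;> simp [swap_apply_of_ne_of_ne] <;> grind

end Cubic

/-- The set of distinct roots of `z³ + g₂z + g₃` admits a nontrivial symmetry by an
affine map `z ↦ az + b` iff its `j`-invariant is `0` (order 3 symmetry) or `1`
(order 2 symmetry). -/
theorem symmetry_iff_jInvariant (z : Fin 3 → ℂ) (hz : Function.Injective z)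
    (hsum : z 0 + z 1 + z 2 = 0) :
    let g2 : ℂ := z 0 * z 1 + z 0 * z 2 + z 1 * z 2
    let g3 : ℂ := -(z 0 * z 1 * z 2)
    let j : ℂ := -4 * g2 ^ 3 / (-4 * g2 ^ 3 - 27 * g3 ^ 2)
    ((∃ (a b : ℂ) (σ : Equiv.Perm (Fin 3)), a ≠ 0 ∧ σ ≠ 1 ∧
        ∀ i, a * z i + b = z (σ i)) ↔ (j = 0 ∨ j = 1)) ∧
    (j = 0 → ∃ (a b : ℂ) (σ : Equiv.Perm (Fin 3)), a ≠ 0 ∧ orderOf σ = 3 ∧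
        ∀ i, a * z i + b = z (σ i)) ∧
    (j = 1 → ∃ (a b : ℂ) (σ : Equiv.Perm (Fin 3)), a ≠ 0 ∧ orderOf σ = 2 ∧
        ∀ i, a * z i + b = z (σ i)) := by
  intro g2 g3 j
  have hdisc : -4 * g2 ^ 3 - 27 * g3 ^ 2 ≠ 0 := discr_ne_zero hz hsum
  have hj0 : j = 0 ↔ g2 = 0 := jInvariant_eq_zero_iff hdisc
  have hj1 : j = 1 ↔ z 0 * z 1 * z 2 = 0 := (jInvariant_eq_one_iff hdisc).trans neg_eq_zero
  have order3 (h : j = 0) := exists_symmetry_orderOf_eq_three (hz.ne (by decide)) hsum (hj0.1 h)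
  have order2 (h : j = 1) := exists_symmetry_orderOf_eq_two hsum (hj1.1 h)
  refine ⟨⟨fun ⟨a, b, σ, _, hσ, h⟩ => ?_, ?_⟩, order3, order2⟩
  · exact (g2_eq_zero_or_prod_eq_zero_of_symmetry hz hsum hσ h).imp hj0.2 hj1.2
  · rintro (h | h)
    · obtain ⟨a, b, σ, ha, hσ, h⟩ := order3 h
      exact ⟨a, b, σ, ha, by rintro rfl; simp at hσ, h⟩
    · obtain ⟨a, b, σ, ha, hσ, h⟩ := order2 h
      exact ⟨a, b, σ, ha, by rintro rfl; simp at hσ, h⟩
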